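/- arXiv:2508.14816 — 2 statements merged into one kernel-verified Lean document; each statement's English description precedes it below -/
import Mathlib

section
/- Consider a sequence of ScBMs indexed by n satisfying Assumptions A1–A3. Suppose the estimated labels ĝ^s (into K_{s0} ≤ K_s communities) and ĝ^r (into K_{r0} ≤ K_r communities) are such that every estimated sender community and every estimated receiver community has size at least c₀ n / K_max. Then with probability at least 1 − o(n^{−1}), all entries of the estimated expected adjacency matrix satisfy Ω̂(i,j) ∈ [δ/2, 1 − δ/2] for all i ≠ j. -/
open MeasureTheory ProbabilityTheory Filter Finset
open scoped ENNReal Classical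

/-- Spectral norm (largest singular value) of a real rectangular matrix. -/
noncomputable def specNorm {p q : ℕ} (M : Matrix (Fin p) (Fin q) ℝ) : ℝ :=
  ‖LinearMap.toContinuousLinearMap (Matrix.toEuclideanLin M)‖

/-- Frobenius norm of a real rectangular matrix. -/
noncomputable def frobNorm {p q : ℕ} (M : Matrix (Fin p) (Fin q) ℝ) : ℝ :=
  Real.sqrt (∑ i, ∑ j, (M i j) ^ 2)

/-- Community separation δ_n of a block probability matrix. -/
noncomputable def sep {Ks Kr : ℕ} (B : Matrix (Fin Ks) (Fin Kr) ℝ) : ℝ :=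
  min (sInf {x | ∃ k k' : Fin Ks, k ≠ k' ∧ x = ⨆ l, |B k l - B k' l|})
      (sInf {x | ∃ l l' : Fin Kr, l ≠ l' ∧ x = ⨆ k, |B k l - B k l'|})

/-- Size of the community `k` under labels `g`. -/
def commSize {n K : ℕ} (g : Fin n → Fin K) (k : Fin K) : ℕ :=
  (Finset.univ.filter fun i => g i = k).card

/-- Expected adjacency matrix of a ScBM (zero diagonal). -/
noncomputable def Omega0 {n Ks Kr : ℕ} (B : Matrix (Fin Ks) (Fin Kr) ℝ)
    (gs : Fin n → Fin Ks) (gr : Fin n → Fin Kr) : Matrix (Fin n) (Fin n) ℝ :=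
  Matrix.of fun i j => if i = j then 0 else B (gs i) (gr j)

/-- Normalized residual matrix of `A` with respect to a matrix `Om` of edge
probabilities (zero diagonal). -/
noncomputable def resid {n : ℕ} (A Om : Matrix (Fin n) (Fin n) ℝ) :
    Matrix (Fin n) (Fin n) ℝ :=
  Matrix.of fun i j => if i = j then 0 else
    (A i j - Om i j) / Real.sqrt (((n : ℝ) - 1) * Om i j * (1 - Om i j))

/-- Plug-in estimator of the block probability matrix. -/
noncomputable def Bhat {n Ks0 Kr0 : ℕ} (A : Matrix (Fin n) (Fin n) ℝ)
    (es : Fin n → Fin Ks0) (er : Fin n → Fin Kr0) : Matrix (Fin Ks0) (Fin Kr0) ℝ :=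
  Matrix.of fun k l =>
    (∑ i ∈ Finset.univ.filter (fun i => es i = k),
      ∑ j ∈ Finset.univ.filter (fun j => er j = l), A i j)
    / ((commSize es k : ℝ) * (commSize er l : ℝ))

/-- Estimated expected adjacency matrix (zero diagonal). -/
noncomputable def OmegaHat {n Ks0 Kr0 : ℕ} (A : Matrix (Fin n) (Fin n) ℝ)
    (es : Fin n → Fin Ks0) (er : Fin n → Fin Kr0) : Matrix (Fin n) (Fin n) ℝ :=
  Matrix.of fun i j => if i = j then 0 else Bhat A es er (es i) (er j)

/-- The test statistic `T̂ = σ₁(R̂) − 2` built from estimated labels. -/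
noncomputable def That {n Ks0 Kr0 : ℕ} (A : Matrix (Fin n) (Fin n) ℝ)
    (es : Fin n → Fin Ks0) (er : Fin n → Fin Kr0) : ℝ :=
  specNorm (resid A (OmegaHat A es er)) - 2

/-!
For vertex sets `S, T` with `|S|, |T| ≥ q := c₀ n / K_max`, Hoeffding's inequality bounds the
probability that the sum of `A` over `S × T` deviates from its mean by `δ |S| |T| / 4` by
`2 exp (-δ² q² / 8)`. An entry of `Ω̂` outside `[δ/2, 1 - δ/2]` forces such a deviation on the
corresponding estimated block, since the mean block average lies in `[3δ/4, 1 - 3δ/4]` (diagonal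
pairs make up at most a quarter of `S × T`). The estimated labels depend on `A`, so we take a union
bound over all `4ⁿ` pairs `(S, T)`; by A3, `q² ≫ n`, hence `n · 4ⁿ · exp (-δ² q² / 8) → 0`.
-/

open Real Topology

lemma measureReal_le_abs_sum_sub_integral_le {Ω ι : Type*} [MeasurableSpace Ω] {μ : Measure Ω}
    [IsProbabilityMeasure μ] {X : ι → Ω → ℝ} (h_indep : iIndepFun X μ)
    (hmeas : ∀ i, Measurable (X i)) {a b : ℝ} (hX : ∀ i ω, X i ω ∈ Set.Icc a b)
    (s : Finset ι) {ε : ℝ} (hε : 0 ≤ ε) :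
    μ.real {ω | ε ≤ |∑ i ∈ s, (X i ω - μ[X i])|}
      ≤ 2 * exp (-2 * ε ^ 2 / (#s * (b - a) ^ 2)) := by
  set Y : ι → Ω → ℝ := fun i ω => X i ω - μ[X i]
  have hY_indep : iIndepFun Y μ :=
    h_indep.comp (fun i (x : ℝ) => x - ∫ ω, X i ω ∂μ) fun i => measurable_id.sub_const _
  have hY_subG : ∀ i ∈ s, HasSubgaussianMGF (Y i) ((‖b - a‖₊ / 2) ^ 2) μ := fun i _ =>
    hasSubgaussianMGF_of_mem_Icc (hmeas i).aemeasurable (ae_of_all _ (hX i))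
  have h_exp : -ε ^ 2 / (2 * ((∑ i ∈ s, (‖b - a‖₊ / 2) ^ 2 : NNReal) : ℝ))
      = -2 * ε ^ 2 / (#s * (b - a) ^ 2) := by
    have hc : (((‖b - a‖₊ / 2) ^ 2 : NNReal) : ℝ) = (b - a) ^ 2 / 4 := by
      simp [div_pow, sq_abs]; norm_num
    rw [NNReal.coe_sum, hc, Finset.sum_const, nsmul_eq_mul]
    generalize (b - a) ^ 2 = d
    ring
  have h_upper := HasSubgaussianMGF.measure_sum_ge_le_of_iIndepFun hY_indep hY_subG hε
  have h_lower := HasSubgaussianMGF.measure_sum_ge_le_of_iIndepFun (X := fun i => -Y i)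
    (hY_indep.comp (fun _ x => -x) fun _ => measurable_neg) (fun i hi => (hY_subG i hi).neg) hε
  rw [h_exp] at h_upper h_lower
  calc μ.real {ω | ε ≤ |∑ i ∈ s, Y i ω|}
      ≤ μ.real ({ω | ε ≤ ∑ i ∈ s, Y i ω} ∪ {ω | ε ≤ ∑ i ∈ s, (-Y i) ω}) := by
        refine measureReal_mono (fun ω hω => ?_)
        simp only [Set.mem_ofPred_eq, Set.mem_union, Pi.neg_apply, Finset.sum_neg_distrib] at hω ⊢
        rcases le_abs'.mp hω with h | h
        · exact Or.inr (by linarith)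
        · exact Or.inl h
    _ ≤ _ := (measureReal_union_le _ _).trans (by linarith)

lemma integral_eq_measureReal_of_eq_zero_or_one {Ω : Type*} [MeasurableSpace Ω] {μ : Measure Ω}
    {X : Ω → ℝ} (hX : Measurable X) (h01 : ∀ ω, X ω = 0 ∨ X ω = 1) :
    μ[X] = μ.real {ω | X ω = 1} := by
  have h_ind : X = {ω | X ω = 1}.indicator 1 := by
    funext ω
    rcases h01 ω with h | h <;> simp [Set.indicator, h]
  conv_lhs => rw [h_ind]
  exact integral_indicator_one (hX (measurableSet_singleton 1))

lemma OmegaHat_apply_of_ne {n K L : ℕ} (A : Matrix (Fin n) (Fin n) ℝ) (es : Fin n → Fin K)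
    (er : Fin n → Fin L) {i j : Fin n} (hij : i ≠ j) :
    OmegaHat A es er i j =
      (∑ i' ∈ univ.filter (es · = es i), ∑ j' ∈ univ.filter (er · = er j), A i' j') /
        (#(univ.filter (es · = es i)) * #(univ.filter (er · = er j))) := by
  simp [OmegaHat, Bhat, commSize, hij]

lemma sum_sum_ite_eq_le_card {α : Type*} [DecidableEq α] (S T : Finset α) :
    ∑ i ∈ S, ∑ j ∈ T, (if i = j then (1 : ℝ) else 0) ≤ #S := by
  calc ∑ i ∈ S, ∑ j ∈ T, (if i = j then (1 : ℝ) else 0)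
      ≤ ∑ _i ∈ S, (1 : ℝ) := by
        refine Finset.sum_le_sum fun i _ => ?_
        rw [Finset.sum_ite_eq]
        split_ifs <;> norm_num
    _ = #S := by simp

lemma sum_sum_mem_Icc_of_offDiag_mem_Icc {n : ℕ} {δ : ℝ} (hδ : 0 ≤ δ)
    {m : Matrix (Fin n) (Fin n) ℝ} (hm : ∀ i j, m i j ∈ Set.Icc 0 1)
    (hm_offDiag : ∀ i j, i ≠ j → m i j ∈ Set.Icc δ (1 - δ))
    {S T : Finset (Fin n)} (hT : 4 ≤ #T) :
    ∑ i ∈ S, ∑ j ∈ T, m i j ∈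
      Set.Icc (3 * δ / 4 * (#S * #T)) ((1 - 3 * δ / 4) * (#S * #T)) := by
  set N : ℝ := #S * #T
  set D : ℝ := ∑ i ∈ S, ∑ j ∈ T, (if i = j then (1 : ℝ) else 0)
  have hD : D ≤ N / 4 := by
    have : (4 : ℝ) ≤ #T := by exact_mod_cast hT
    nlinarith [sum_sum_ite_eq_le_card S T, (#S).cast_nonneg (α := ℝ)]
  have hm_bounds : ∀ i j, δ - δ * (if i = j then 1 else 0) ≤ m i j ∧
      m i j ≤ 1 - δ + δ * (if i = j then 1 else 0) := by
    intro i j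
    by_cases hij : i = j
    · simp only [hij, if_true, mul_one, sub_self, sub_add_cancel]
      exact hm j j
    · simp only [hij, if_false, mul_zero, sub_zero, add_zero]
      exact hm_offDiag i j hij
  have h_const : ∀ c : ℝ, ∑ _i ∈ S, ∑ _j ∈ T, c = c * N := fun c => by
    simp only [Finset.sum_const, nsmul_eq_mul, N]; ring
  constructor
  · calc 3 * δ / 4 * N
        ≤ δ * N - δ * D := by nlinarith
      _ = ∑ i ∈ S, ∑ j ∈ T, (δ - δ * (if i = j then 1 else 0)) := by
          simp only [Finset.sum_sub_distrib, Finset.mul_sum, h_const, D]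
      _ ≤ ∑ i ∈ S, ∑ j ∈ T, m i j :=
          Finset.sum_le_sum fun i _ => Finset.sum_le_sum fun j _ => (hm_bounds i j).1
  · calc ∑ i ∈ S, ∑ j ∈ T, m i j
        ≤ ∑ i ∈ S, ∑ j ∈ T, (1 - δ + δ * (if i = j then 1 else 0)) :=
          Finset.sum_le_sum fun i _ => Finset.sum_le_sum fun j _ => (hm_bounds i j).2
      _ = (1 - δ) * N + δ * D := by
          simp only [Finset.sum_add_distrib, Finset.mul_sum, h_const, D]
      _ ≤ (1 - 3 * δ / 4) * N := by nlinarith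

lemma le_abs_sum_sum_sub_of_div_notMem_Icc {n : ℕ} {δ : ℝ} (hδ : 0 ≤ δ)
    {A m : Matrix (Fin n) (Fin n) ℝ} (hm : ∀ i j, m i j ∈ Set.Icc 0 1)
    (hm_offDiag : ∀ i j, i ≠ j → m i j ∈ Set.Icc δ (1 - δ))
    {S T : Finset (Fin n)} (hS : 0 < #S) (hT : 4 ≤ #T)
    (h : (∑ i ∈ S, ∑ j ∈ T, A i j) / (#S * #T) ∉ Set.Icc (δ / 2) (1 - δ / 2)) :
    δ / 4 * (#S * #T) ≤ |∑ i ∈ S, ∑ j ∈ T, (A i j - m i j)| := by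
  have hN : (0 : ℝ) < #S * #T := by
    have : (0 : ℝ) < #T := by exact_mod_cast (by omega : 0 < #T)
    positivity
  obtain ⟨h_lower, h_upper⟩ := sum_sum_mem_Icc_of_offDiag_mem_Icc hδ hm hm_offDiag (S := S) hT
  simp only [Finset.sum_sub_distrib]
  rw [Set.mem_Icc, not_and_or, not_le, not_le, div_lt_iff₀ hN, lt_div_iff₀ hN] at h
  rcases h with h | h
  · rw [abs_sub_comm]; exact le_abs.mpr (Or.inl (by linarith))
  · exact le_abs.mpr (Or.inl (by linarith))

lemma exists_le_abs_blockSum_sub_of_OmegaHat_notMem_Icc {n K L : ℕ} {δ q : ℝ} (hδ : 0 ≤ δ)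
    (hq : 4 ≤ q) {A m : Matrix (Fin n) (Fin n) ℝ} (hm : ∀ i j, m i j ∈ Set.Icc 0 1)
    (hm_offDiag : ∀ i j, i ≠ j → m i j ∈ Set.Icc δ (1 - δ))
    {es : Fin n → Fin K} {er : Fin n → Fin L}
    (hes : ∀ k, q ≤ commSize es k) (her : ∀ l, q ≤ commSize er l)
    (h : ¬ ∀ i j, i ≠ j → OmegaHat A es er i j ∈ Set.Icc (δ / 2) (1 - δ / 2)) :
    ∃ S T : Finset (Fin n), q ≤ #S ∧ q ≤ #T ∧
      δ / 4 * (#S * #T) ≤ |∑ i ∈ S, ∑ j ∈ T, (A i j - m i j)| := by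
  simp only [not_forall] at h
  obtain ⟨i, j, hij, h_notMem⟩ := h
  rw [OmegaHat_apply_of_ne A es er hij] at h_notMem
  have hS := hes (es i)
  have hT := her (er j)
  refine ⟨_, _, hS, hT, le_abs_sum_sum_sub_of_div_notMem_Icc hδ hm hm_offDiag ?_ ?_ h_notMem⟩
  · exact_mod_cast (show (0 : ℝ) < commSize es (es i) by linarith)
  · exact_mod_cast (show (4 : ℝ) ≤ commSize er (er j) by linarith)

section BlockDeviation

variable {Ω : Type*} [MeasurableSpace Ω] {μ : Measure Ω} [IsProbabilityMeasure μ] {n : ℕ}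
  {A : Ω → Matrix (Fin n) (Fin n) ℝ}

lemma measureReal_le_abs_blockSum_sub_integral_le
    (hindep : iIndepFun (fun (p : Fin n × Fin n) ω => A ω p.1 p.2) μ)
    (hmeas : ∀ i j, Measurable fun ω => A ω i j) (h01 : ∀ ω i j, A ω i j = 0 ∨ A ω i j = 1)
    (S T : Finset (Fin n)) {t : ℝ} (ht : 0 ≤ t) :
    μ.real {ω | t * (#S * #T) ≤ |∑ i ∈ S, ∑ j ∈ T, (A ω i j - μ[fun ω => A ω i j])|}
      ≤ 2 * exp (-2 * t ^ 2 * (#S * #T)) := by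
  have h_Icc : ∀ (p : Fin n × Fin n) ω, A ω p.1 p.2 ∈ Set.Icc (0 : ℝ) 1 := fun p ω => by
    rcases h01 ω p.1 p.2 with h | h <;> simp [h]
  have h_exp : -2 * (t * (#S * #T)) ^ 2 / ((#S * #T : ℝ) * (1 - 0) ^ 2)
      = -2 * t ^ 2 * (#S * #T) := by
    rw [sub_zero, one_pow, mul_one]
    rcases eq_or_ne ((#S : ℝ) * #T) 0 with h | h
    · simp [h]
    · field_simp
  have h_hoeffding := measureReal_le_abs_sum_sub_integral_le hindep (fun p => hmeas p.1 p.2)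
    h_Icc (S ×ˢ T) (ε := t * (#S * #T)) (by positivity)
  simp only [Finset.sum_product] at h_hoeffding
  rwa [Finset.card_product, Nat.cast_mul, h_exp] at h_hoeffding

lemma measureReal_exists_OmegaHat_notMem_Icc_le
    (hindep : iIndepFun (fun (p : Fin n × Fin n) ω => A ω p.1 p.2) μ)
    (hmeas : ∀ i j, Measurable fun ω => A ω i j) (h01 : ∀ ω i j, A ω i j = 0 ∨ A ω i j = 1)
    {δ : ℝ} (hδ : 0 ≤ δ) (hA : ∀ i j, i ≠ j → μ.real {ω | A ω i j = 1} ∈ Set.Icc δ (1 - δ))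
    {K L : ℕ} (es : Ω → Fin n → Fin K) (er : Ω → Fin n → Fin L) {q : ℝ} (hq : 4 ≤ q)
    (hes : ∀ ω k, q ≤ commSize (es ω) k) (her : ∀ ω l, q ≤ commSize (er ω) l) :
    μ.real {ω | ¬ ∀ i j, i ≠ j → OmegaHat (A ω) (es ω) (er ω) i j ∈ Set.Icc (δ / 2) (1 - δ / 2)}
      ≤ 4 ^ n * (2 * exp (-(δ ^ 2 * q ^ 2 / 8))) := by
  set m : Matrix (Fin n) (Fin n) ℝ := fun i j => μ[fun ω => A ω i j]
  have hm_eq : ∀ i j, m i j = μ.real {ω | A ω i j = 1} := fun i j =>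
    integral_eq_measureReal_of_eq_zero_or_one (hmeas i j) (h01 · i j)
  have hm : ∀ i j, m i j ∈ Set.Icc 0 1 := fun i j => by
    rw [hm_eq]; exact ⟨measureReal_nonneg, measureReal_le_one⟩
  have hm_offDiag : ∀ i j, i ≠ j → m i j ∈ Set.Icc δ (1 - δ) := fun i j hij => by
    rw [hm_eq]; exact hA i j hij
  let blocks : Finset (Finset (Fin n) × Finset (Fin n)) :=
    univ.filter fun ST => q ≤ #ST.1 ∧ q ≤ #ST.2
  let deviation (ST : Finset (Fin n) × Finset (Fin n)) : Set Ω :=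
    {ω | δ / 4 * (#ST.1 * #ST.2) ≤ |∑ i ∈ ST.1, ∑ j ∈ ST.2, (A ω i j - m i j)|}
  have h_sub : {ω | ¬ ∀ i j, i ≠ j → OmegaHat (A ω) (es ω) (er ω) i j ∈
      Set.Icc (δ / 2) (1 - δ / 2)} ⊆ ⋃ ST ∈ blocks, deviation ST := fun ω hω => by
    obtain ⟨S, T, hS, hT, h⟩ :=
      exists_le_abs_blockSum_sub_of_OmegaHat_notMem_Icc hδ hq hm hm_offDiag (hes ω) (her ω) hω
    exact Set.mem_biUnion (x := (S, T)) (by simp [blocks, hS, hT]) h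
  have h_block : ∀ ST ∈ blocks, μ.real (deviation ST) ≤ 2 * exp (-(δ ^ 2 * q ^ 2 / 8)) := by
    intro ST hST
    simp only [blocks, Finset.mem_filter, Finset.mem_univ, true_and] at hST
    refine (measureReal_le_abs_blockSum_sub_integral_le hindep hmeas h01 ST.1 ST.2
      (by positivity : 0 ≤ δ / 4)).trans ?_
    have : q ^ 2 ≤ #ST.1 * #ST.2 := by nlinarith [hST.1, hST.2]
    gcongr
    nlinarith [sq_nonneg δ]
  have h_card : (#blocks : ℝ) ≤ 4 ^ n := by
    have : #blocks ≤ 4 ^ n := by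
      calc #blocks ≤ Fintype.card (Finset (Fin n) × Finset (Fin n)) := Finset.card_filter_le _ _
        _ = 4 ^ n := by simp [Fintype.card_finset, ← mul_pow]
    exact_mod_cast this
  calc _ ≤ μ.real (⋃ ST ∈ blocks, deviation ST) := measureReal_mono h_sub (measure_ne_top _ _)
    _ ≤ ∑ ST ∈ blocks, μ.real (deviation ST) := measureReal_biUnion_finset_le _ _
    _ ≤ ∑ _ST ∈ blocks, 2 * exp (-(δ ^ 2 * q ^ 2 / 8)) := Finset.sum_le_sum h_block
    _ ≤ 4 ^ n * (2 * exp (-(δ ^ 2 * q ^ 2 / 8))) := by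
        rw [Finset.sum_const, nsmul_eq_mul]; gcongr

end BlockDeviation

lemma tendsto_div_natCast_of_tendsto_mul_max_log_div {f g : ℕ → ℝ} (hf : ∀ n, 0 ≤ f n)
    (h : Tendsto (fun n : ℕ => f n * max (log n) (g n) / n) atTop (𝓝 0)) :
    Tendsto (fun n : ℕ => f n / n) atTop (𝓝 0) := by
  refine squeeze_zero' (Eventually.of_forall fun n => div_nonneg (hf n) n.cast_nonneg) ?_ h
  filter_upwards [eventually_ge_atTop 3] with n hn
  have h_log : 1 ≤ log n := by
    rw [Real.le_log_iff_exp_le (by positivity)]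
    have : (3 : ℝ) ≤ n := by exact_mod_cast hn
    linarith [Real.exp_one_lt_d9]
  gcongr
  exact le_mul_of_one_le_right (hf n) (h_log.trans (le_max_left _ _))

lemma tendsto_natCast_mul_four_pow_mul_exp_neg {f : ℕ → ℝ} (hf : ∀ᶠ n in atTop, 3 * n ≤ f n) :
    Tendsto (fun n : ℕ => n * (4 ^ n * (2 * exp (-f n)))) atTop (𝓝 0) := by
  have h_lim : Tendsto (fun n : ℕ => 2 * ((n : ℝ) ^ 1 * exp (-n))) atTop (𝓝 0) := by
    simpa using ((Real.tendsto_pow_mul_exp_neg_atTop_nhds_zero 1).comp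
      tendsto_natCast_atTop_atTop).const_mul 2
  refine squeeze_zero' (Eventually.of_forall fun n => by positivity) ?_ h_lim
  filter_upwards [hf] with n hn
  have h_four : (4 : ℝ) ^ n ≤ exp (2 * n) := by
    rw [← Real.exp_one_rpow, Real.rpow_mul (Real.exp_pos 1).le, Real.rpow_natCast]
    gcongr
    rw [Real.exp_one_rpow]
    linarith [Real.quadratic_le_exp_of_nonneg (x := 2) (by norm_num)]
  calc (n : ℝ) * (4 ^ n * (2 * exp (-f n)))
      ≤ n * (exp (2 * n) * (2 * exp (-(3 * n)))) := by gcongr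
    _ = 2 * ((n : ℝ) ^ 1 * exp (-n)) := by
        rw [pow_one, show -(n : ℝ) = 2 * n + -(3 * n) by ring, Real.exp_add]; ring

lemma mul_le_mul_div_sq_of_sq_div_le {n K a b c : ℝ} (hn : 0 < n) (hK : 0 < K) (ha : 0 < a)
    (h : K ^ 2 / n ≤ b * c ^ 2 / a) : a * n ≤ b * (c * n / K) ^ 2 := by
  rw [div_le_div_iff₀ hn ha] at h
  rw [div_pow, mul_div_assoc', le_div_iff₀ (by positivity)]
  nlinarith

theorem OmegaHat_bounded_general
    {Ωsp : ℕ → Type} [∀ n, MeasurableSpace (Ωsp n)]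
    (μ : ∀ n, Measure (Ωsp n)) (hprob : ∀ n, IsProbabilityMeasure (μ n))
    (Ks Kr : ℕ → ℕ)
    (B : ∀ n, Matrix (Fin (Ks n)) (Fin (Kr n)) ℝ)
    (gs : ∀ n, Fin n → Fin (Ks n)) (gr : ∀ n, Fin n → Fin (Kr n))
    (A : ∀ n, Ωsp n → Matrix (Fin n) (Fin n) ℝ)
    (hmeasA : ∀ n (i j : Fin n), Measurable fun ω => A n ω i j)
    (h01 : ∀ n ω (i j : Fin n), A n ω i j = 0 ∨ A n ω i j = 1)
    (hdist : ∀ n (i j : Fin n), i ≠ j →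
      μ n {ω | A n ω i j = 1} = ENNReal.ofReal (B n (gs n i) (gr n j)))
    (hindep : ∀ n, iIndepFun
      (m := fun _ : Fin n × Fin n => (inferInstance : MeasurableSpace ℝ))
      (fun p ω => A n ω p.1 p.2) (μ n))
    (δ : ℝ) (hδ : 0 < δ)
    (hA1 : ∀ n (k : Fin (Ks n)) (l : Fin (Kr n)), δ ≤ B n k l ∧ B n k l ≤ 1 - δ)
    (c0 : ℝ) (hc0 : 0 < c0)
    (hA3 : Tendsto (fun n : ℕ =>
        (max (Ks n) (Kr n) : ℝ) ^ 2 * max (Real.log n) (1 / (sep (B n)) ^ 2) / n)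
      atTop (nhds 0))
    (Ks0 Kr0 : ℕ → ℕ)
    (es : ∀ n, Ωsp n → Fin n → Fin (Ks0 n)) (er : ∀ n, Ωsp n → Fin n → Fin (Kr0 n))
    (hsizeS : ∀ n ω (k : Fin (Ks0 n)),
      c0 * n / (max (Ks n) (Kr n) : ℝ) ≤ (commSize (es n ω) k : ℝ))
    (hsizeR : ∀ n ω (l : Fin (Kr0 n)),
      c0 * n / (max (Ks n) (Kr n) : ℝ) ≤ (commSize (er n ω) l : ℝ)) :
    Tendsto (fun n : ℕ => (n : ℝ) *
        (μ n {ω | ¬ ∀ i j : Fin n, i ≠ j →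
          OmegaHat (A n ω) (es n ω) (er n ω) i j ∈
            Set.Icc (δ / 2) (1 - δ / 2)}).toReal)
      atTop (nhds 0) := by
  have hδ_half : δ ≤ 1 / 2 := by
    obtain ⟨h_lo, h_hi⟩ := hA1 1 (gs 1 0) (gr 1 0)
    linarith
  set K : ℕ → ℝ := fun n => max (Ks n) (Kr n)
  set q : ℕ → ℝ := fun n => c0 * n / K n
  have hK_sq : Tendsto (fun n : ℕ => K n ^ 2 / n) atTop (𝓝 0) :=
    tendsto_div_natCast_of_tendsto_mul_max_log_div (fun n => by positivity) hA3
  have h_large : ∀ᶠ n : ℕ in atTop, 0 < n ∧ 24 * n ≤ δ ^ 2 * q n ^ 2 := by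
    filter_upwards [eventually_gt_atTop 0,
      hK_sq.eventually (ge_mem_nhds (by positivity : (0 : ℝ) < δ ^ 2 * c0 ^ 2 / 24))]
      with n hn h_sq
    have hK_pos : (0 : ℝ) < K n := by
      have := (gs n ⟨0, hn⟩).pos
      positivity
    exact ⟨hn, mul_le_mul_div_sq_of_sq_div_le (by positivity) hK_pos (by positivity) h_sq⟩
  refine squeeze_zero' (Eventually.of_forall fun n => by positivity) ?_
    (tendsto_natCast_mul_four_pow_mul_exp_neg (f := fun n => δ ^ 2 * q n ^ 2 / 8) ?_)
  · filter_upwards [h_large] with n ⟨hn, hq⟩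
    have hq_four : 4 ≤ q n := by
      have hn_one : (1 : ℝ) ≤ n := by exact_mod_cast hn
      have hq_nonneg : 0 ≤ q n := by positivity
      have hδ_sq : δ ^ 2 ≤ 1 / 4 := by nlinarith
      nlinarith [mul_le_mul_of_nonneg_right hδ_sq (sq_nonneg (q n))]
    have hA : ∀ i j : Fin n, i ≠ j → (μ n).real {ω | A n ω i j = 1} ∈ Set.Icc δ (1 - δ) :=
      fun i j hij => by
        rw [measureReal_def, hdist n i j hij, ENNReal.toReal_ofReal (hδ.le.trans (hA1 n _ _).1)]
        exact hA1 n _ _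
    have := hprob n
    exact mul_le_mul_of_nonneg_left (measureReal_exists_OmegaHat_notMem_Icc_le (hindep n)
      (hmeasA n) (h01 n) hδ.le hA (es n) (er n) hq_four (hsizeS n) (hsizeR n)) n.cast_nonneg
  · filter_upwards [h_large] with n ⟨_, hq⟩
    linarith

/-- Lemma (entries of `Ω̂` are bounded away from 0 and 1): under A1–A3, if every
estimated sender and receiver community has size at least `c₀ n / K_max`, then with
probability `1 − o(n^{−1})` all off-diagonal entries of `Ω̂` lie in
`[δ/2, 1 − δ/2]`. -/
theorem OmegaHat_bounded
    {Ωsp : ℕ → Type} [∀ n, MeasurableSpace (Ωsp n)]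
    (μ : ∀ n, Measure (Ωsp n)) (hprob : ∀ n, IsProbabilityMeasure (μ n))
    (Ks Kr : ℕ → ℕ) (hKs : ∀ n, 1 ≤ Ks n) (hKr : ∀ n, 1 ≤ Kr n)
    (B : ∀ n, Matrix (Fin (Ks n)) (Fin (Kr n)) ℝ)
    (gs : ∀ n, Fin n → Fin (Ks n)) (gr : ∀ n, Fin n → Fin (Kr n))
    (A : ∀ n, Ωsp n → Matrix (Fin n) (Fin n) ℝ)
    (hmeasA : ∀ n (i j : Fin n), Measurable fun ω => A n ω i j)
    (h01 : ∀ n ω (i j : Fin n), A n ω i j = 0 ∨ A n ω i j = 1)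
    (hdiagA : ∀ n ω (i : Fin n), A n ω i i = 0)
    (hdist : ∀ n (i j : Fin n), i ≠ j →
      μ n {ω | A n ω i j = 1} = ENNReal.ofReal (B n (gs n i) (gr n j)))
    (hindep : ∀ n, iIndepFun
      (m := fun _ : Fin n × Fin n => (inferInstance : MeasurableSpace ℝ))
      (fun p ω => A n ω p.1 p.2) (μ n))
    (δ : ℝ) (hδ : 0 < δ)
    (hA1 : ∀ n (k : Fin (Ks n)) (l : Fin (Kr n)), δ ≤ B n k l ∧ B n k l ≤ 1 - δ)
    (c0 : ℝ) (hc0 : 0 < c0)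
    (hA2s : ∀ n (k : Fin (Ks n)), c0 * n / Ks n ≤ (commSize (gs n) k : ℝ))
    (hA2r : ∀ n (l : Fin (Kr n)), c0 * n / Kr n ≤ (commSize (gr n) l : ℝ))
    (hA3 : Tendsto (fun n : ℕ =>
        (max (Ks n) (Kr n) : ℝ) ^ 2 * max (Real.log n) (1 / (sep (B n)) ^ 2) / n)
      atTop (nhds 0))
    (Ks0 Kr0 : ℕ → ℕ) (hKs0 : ∀ n, Ks0 n ≤ Ks n) (hKr0 : ∀ n, Kr0 n ≤ Kr n)
    (es : ∀ n, Ωsp n → Fin n → Fin (Ks0 n)) (er : ∀ n, Ωsp n → Fin n → Fin (Kr0 n))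
    (hsizeS : ∀ n ω (k : Fin (Ks0 n)),
      c0 * n / (max (Ks n) (Kr n) : ℝ) ≤ (commSize (es n ω) k : ℝ))
    (hsizeR : ∀ n ω (l : Fin (Kr0 n)),
      c0 * n / (max (Ks n) (Kr n) : ℝ) ≤ (commSize (er n ω) l : ℝ)) :
    Tendsto (fun n : ℕ => (n : ℝ) *
        (μ n {ω | ¬ ∀ i j : Fin n, i ≠ j →
          OmegaHat (A n ω) (es n ω) (er n ω) i j ∈
            Set.Icc (δ / 2) (1 - δ / 2)}).toReal)
      atTop (nhds 0) :=
  OmegaHat_bounded_general μ hprob Ks Kr B gs gr A hmeasA h01 hdist hindep δ hδ hA1 c0 hc0 hA3 Ks0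
    Kr0 es er hsizeS hsizeR
end

section
/- Let n ≥ 2 with 4 log n ≤ n, and let W be a p × q random matrix with p ≤ n, q ≤ n, and p + q ≤ 3n, whose entries W(i,j) = A(i,j) − Ω(i,j) are independent, mean zero, satisfy |W(i,j)| ≤ 1 almost surely, and have variances Var(W(i,j)) ≤ 1/4 (e.g., A(i,j) Bernoulli(Ω(i,j))). Then P(‖W‖ ≥ 3√(n log n)) ≤ 3 n^{−7/2}, where ‖W‖ denotes the spectral norm. -/
open MeasureTheory ProbabilityTheory Filter Finset
open scoped ENNReal Classical

/-!
The spectral norm is discretized on nets: if `N` and `M` are `1/16`-nets of the unit spheres of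
`ℝ^p` and `ℝ^q`, then `(7/8) ‖W‖ ≤ max_{u ∈ N, v ∈ M} |⟪u, W v⟫|`, and a volume comparison of
disjoint balls gives nets of sizes `33^p` and `33^q`. For fixed unit vectors `u, v`, the form
`⟪u, W v⟫ = ∑ u_i v_j W_ij` is a sum of independent centered terms bounded by `|u_i v_j|`, with
`∑ (u_i v_j)^2 = 1`, so Hoeffding's inequality bounds its tail by `2 exp (-s^2/2)`. A union
bound over the `33^(p+q) ≤ 33^(2n)` pairs at `s = (7/8) · 3 √(n log n)` gives `3 n^(-7/2)` once
`n ≥ 21`. For `n ≤ 20` the event is empty: `‖W‖ ≤ ‖W‖_F ≤ n < 3 √(n log n)`.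
-/

open Metric Real Module
open scoped RealInnerProductSpace NNReal

section Nets

variable {E : Type*} [NormedAddCommGroup E] [NormedSpace ℝ E] [FiniteDimensional ℝ E]

lemma card_le_of_isSeparated_of_subset_closedBall {C : Finset E} {ε : ℝ≥0} (hε : 0 < ε)
    (hC : (C : Set E) ⊆ closedBall 0 1) (hsep : IsSeparated ε (C : Set E)) :
    (C.card : ℝ) ≤ (1 + 2 / ε) ^ finrank ℝ E := by
  let _ : MeasurableSpace E := borel E
  have : BorelSpace E := ⟨rfl⟩
  set μ : Measure E := Measure.addHaar
  set r : ℝ := ε / 2 with hr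
  have hr0 : 0 < r := by positivity
  have hdisj : (C : Set E).PairwiseDisjoint (ball · r) := by
    intro x hx y hy hxy
    refine ball_disjoint_ball ?_
    have hsep' : (ε : ℝ≥0∞) < edist x y := hsep hx hy hxy
    rw [edist_nndist, ENNReal.coe_lt_coe, ← NNReal.coe_lt_coe, coe_nndist] at hsep'
    linarith
  have hsub : (⋃ x ∈ C, ball x r) ⊆ ball 0 (1 + r) := by
    refine Set.iUnion₂_subset fun x hx => ball_subset_ball' ?_
    have hx₁ := mem_closedBall.mp (hC hx)
    linarith
  have hvol : (C.card : ℝ≥0∞) * ENNReal.ofReal (r ^ finrank ℝ E) ≤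
      ENNReal.ofReal ((1 + r) ^ finrank ℝ E) := by
    have hV0 : μ (ball 0 1) ≠ 0 := (measure_ball_pos μ 0 one_pos).ne'
    have hVt : μ (ball 0 1) ≠ ⊤ := measure_ball_lt_top.ne
    rw [← ENNReal.mul_le_mul_iff_left hV0 hVt]
    calc (C.card : ℝ≥0∞) * ENNReal.ofReal (r ^ finrank ℝ E) * μ (ball 0 1)
        = ∑ x ∈ C, μ (ball x r) := by
          simp [Measure.addHaar_ball_of_pos μ _ hr0, mul_assoc]
      _ = μ (⋃ x ∈ C, ball x r) :=
          (measure_biUnion_finset hdisj fun _ _ => measurableSet_ball).symm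
      _ ≤ μ (ball 0 (1 + r)) := measure_mono hsub
      _ = _ := Measure.addHaar_ball_of_pos μ _ (by positivity)
  rw [← ENNReal.ofReal_natCast, ← ENNReal.ofReal_mul (by positivity),
    ENNReal.ofReal_le_ofReal_iff (by positivity)] at hvol
  calc (C.card : ℝ) = C.card * r ^ finrank ℝ E / r ^ finrank ℝ E := by field_simp
    _ ≤ (1 + r) ^ finrank ℝ E / r ^ finrank ℝ E := by gcongr
    _ = (1 + 2 / ε) ^ finrank ℝ E := by rw [← div_pow]; congr 1; rw [hr]; field_simp; ring

lemma packingNumber_le_of_subset_closedBall {A : Set E} (hA : A ⊆ closedBall 0 1) {ε : ℝ≥0}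
    (hε : 0 < ε) : packingNumber ε A ≤ ⌊(1 + 2 / (ε : ℝ)) ^ finrank ℝ E⌋₊ := by
  refine iSup₂_le fun C hCA => iSup_le fun hsep => ?_
  by_contra! hlt
  obtain ⟨D, hDC, hD⟩ := Set.exists_subset_encard_eq (Order.add_one_le_of_lt hlt)
  have hDfin : D.Finite := Set.finite_of_encard_eq_coe hD
  have hcard := card_le_of_isSeparated_of_subset_closedBall (C := hDfin.toFinset) hε
    (by simpa using (hDC.trans hCA).trans hA) (by simpa using hsep.subset hDC)
  rw [hDfin.encard_eq_coe_toFinset_card] at hD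
  have hcard_eq : hDfin.toFinset.card = ⌊(1 + 2 / (ε : ℝ)) ^ finrank ℝ E⌋₊ + 1 := by
    exact_mod_cast hD
  have hcard_le := Nat.le_floor hcard
  omega

lemma exists_finset_isCover_of_subset_closedBall {A : Set E} (hA : A ⊆ closedBall 0 1)
    {ε : ℝ≥0} (hε : 0 < ε) :
    ∃ N : Finset E, (N : Set E) ⊆ A ∧ IsCover ε A N ∧
      (N.card : ℝ) ≤ (1 + 2 / ε) ^ finrank ℝ E := by
  have hpack := packingNumber_le_of_subset_closedBall hA hε
  have hfin : packingNumber ε A ≠ ⊤ := ne_top_of_le_ne_top (by simp) hpack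
  have hNfin : (maximalSeparatedSet ε A).Finite :=
    Set.finite_of_encard_le_coe ((encard_maximalSeparatedSet hfin).trans_le hpack)
  refine ⟨hNfin.toFinset, by simpa using maximalSeparatedSet_subset,
    by simpa using isCover_maximalSeparatedSet hfin, ?_⟩
  exact card_le_of_isSeparated_of_subset_closedBall hε
    (by simpa using maximalSeparatedSet_subset.trans hA)
    (by simpa using isSeparated_maximalSeparatedSet)

end Nets

section NetsOfSpheres

variable {E F : Type*} [NormedAddCommGroup E] [InnerProductSpace ℝ E]
  [NormedAddCommGroup F] [InnerProductSpace ℝ F] {δ : ℝ≥0} {c : ℝ}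

lemma norm_le_of_isCover_sphere {N : Set F} (hN : IsCover δ (sphere 0 1) N) (hc : 0 ≤ c)
    {y : F} (hy : ∀ u ∈ N, ⟪u, y⟫ ≤ c) : ‖y‖ ≤ c + δ * ‖y‖ := by
  rcases eq_or_ne y 0 with rfl | hy0
  · simpa using hc
  have hunit : ‖y‖⁻¹ • y ∈ sphere (0 : F) 1 := by
    simp [norm_smul, hy0]
  obtain ⟨u, hu, hdist⟩ := Set.mem_iUnion₂.mp (hN.subset_iUnion_closedBall hunit)
  rw [mem_closedBall, dist_eq_norm] at hdist
  calc ‖y‖ = ⟪‖y‖⁻¹ • y, y⟫ := by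
        rw [real_inner_smul_left, real_inner_self_eq_norm_sq]; field_simp
    _ = ⟪u, y⟫ + ⟪‖y‖⁻¹ • y - u, y⟫ := by rw [inner_sub_left]; ring
    _ ≤ c + ‖‖y‖⁻¹ • y - u‖ * ‖y‖ := add_le_add (hy u hu) (real_inner_le_norm _ _)
    _ ≤ c + δ * ‖y‖ := by gcongr

lemma opNorm_le_of_isCover_sphere (T : E →L[ℝ] F) {N : Set F} {M : Set E}
    (hN₁ : N ⊆ closedBall 0 1) (hN : IsCover δ (sphere 0 1) N) (hM : IsCover δ (sphere 0 1) M)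
    (hc : 0 ≤ c) (hT : ∀ u ∈ N, ∀ v ∈ M, |⟪u, T v⟫| ≤ c) : (1 - 2 * δ) * ‖T‖ ≤ c := by
  suffices ‖T‖ ≤ c + 2 * δ * ‖T‖ by linarith
  refine T.opNorm_le_of_unit_norm (by positivity) fun w hw => ?_
  obtain ⟨v, hv, hdist⟩ :=
    Set.mem_iUnion₂.mp (hM.subset_iUnion_closedBall (mem_sphere_zero_iff_norm.mpr hw))
  rw [mem_closedBall, dist_eq_norm] at hdist
  have hnet : ∀ u ∈ N, ⟪u, T w⟫ ≤ c + δ * ‖T‖ := fun u hu => by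
    have hu₁ : ‖u‖ ≤ 1 := mem_closedBall_zero_iff.mp (hN₁ hu)
    calc ⟪u, T w⟫ = ⟪u, T v⟫ + ⟪u, T (w - v)⟫ := by rw [map_sub, inner_sub_right]; ring
      _ ≤ c + ‖u‖ * ‖T (w - v)‖ :=
          add_le_add ((le_abs_self _).trans (hT u hu v hv)) (real_inner_le_norm _ _)
      _ ≤ c + 1 * (‖T‖ * δ) := by gcongr; exact T.le_opNorm_of_le hdist
      _ = c + δ * ‖T‖ := by ring
  have hTw : ‖T w‖ ≤ ‖T‖ := by simpa [hw] using T.le_opNorm w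
  calc ‖T w‖ ≤ c + δ * ‖T‖ + δ * ‖T w‖ :=
        norm_le_of_isCover_sphere hN (by positivity) hnet
    _ ≤ c + 2 * δ * ‖T‖ := by nlinarith [δ.coe_nonneg]

lemma exists_le_abs_inner_of_isCover_sphere (T : E →L[ℝ] F) {N : Finset F} {M : Finset E}
    (hN₁ : (N : Set F) ⊆ closedBall 0 1) (hN : IsCover δ (sphere 0 1) (N : Set F))
    (hM : IsCover δ (sphere 0 1) (M : Set E)) {s : ℝ} (hs : 0 < s)
    (hT : s ≤ (1 - 2 * δ) * ‖T‖) : ∃ u ∈ N, ∃ v ∈ M, s ≤ |⟪u, T v⟫| := by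
  set m : ℝ≥0 := (N ×ˢ M).sup fun z => ‖⟪z.1, T z.2⟫‖₊
  have hm : (1 - 2 * δ) * ‖T‖ ≤ m := opNorm_le_of_isCover_sphere T hN₁ hN hM m.coe_nonneg
    fun u hu v hv => by
      rw [← Real.norm_eq_abs, ← coe_nnnorm, NNReal.coe_le_coe]
      exact Finset.le_sup (f := fun z : F × E => ‖⟪z.1, T z.2⟫‖₊)
        (Finset.mem_product.mpr ⟨hu, hv⟩ : (u, v) ∈ N ×ˢ M)
  obtain ⟨z, hz, hsz⟩ := (Finset.le_sup_iff (Real.toNNReal_pos.mpr hs)).mp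
    (Real.toNNReal_le_iff_le_coe.mpr (hT.trans hm))
  rw [Finset.mem_product] at hz
  exact ⟨z.1, hz.1, z.2, hz.2, by simpa [Real.toNNReal_le_iff_le_coe] using hsz⟩

end NetsOfSpheres

section Hoeffding

variable {Ω : Type*} [MeasurableSpace Ω] {μ : Measure Ω}

lemma measure_abs_sum_ge_le_of_iIndepFun {ι : Type*} {X : ι → Ω → ℝ}
    (h_indep : iIndepFun X μ) {c : ι → ℝ≥0} {s : Finset ι}
    (h_subG : ∀ i ∈ s, HasSubgaussianMGF (X i) (c i) μ) {ε : ℝ} (hε : 0 ≤ ε) :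
    μ.real {ω | ε ≤ |∑ i ∈ s, X i ω|} ≤ 2 * exp (-ε ^ 2 / (2 * ∑ i ∈ s, c i)) := by
  have : IsProbabilityMeasure μ := h_indep.isProbabilityMeasure
  have h_upper := HasSubgaussianMGF.measure_sum_ge_le_of_iIndepFun h_indep h_subG hε
  have h_lower := HasSubgaussianMGF.measure_sum_ge_le_of_iIndepFun (X := fun i ω => -X i ω)
    (h_indep.comp (fun _ x => -x) fun _ => measurable_neg) (fun i hi => (h_subG i hi).neg) hε
  calc μ.real {ω | ε ≤ |∑ i ∈ s, X i ω|}
      ≤ μ.real ({ω | ε ≤ ∑ i ∈ s, X i ω} ∪ {ω | ε ≤ ∑ i ∈ s, -X i ω}) := by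
        refine measureReal_mono fun ω (hω : ε ≤ |_|) => ?_
        show ε ≤ _ ∨ ε ≤ ∑ i ∈ s, -X i ω
        rw [Finset.sum_neg_distrib]
        exact le_abs.mp hω
    _ ≤ μ.real {ω | ε ≤ ∑ i ∈ s, X i ω} + μ.real {ω | ε ≤ ∑ i ∈ s, -X i ω} :=
        measureReal_union_le _ _
    _ ≤ 2 * exp (-ε ^ 2 / (2 * ∑ i ∈ s, c i)) := by linarith

lemma measure_abs_sum_mul_ge_le_of_abs_le_one [IsProbabilityMeasure μ] {ι : Type*} [Fintype ι]
    {X : ι → Ω → ℝ} (hXm : ∀ i, AEMeasurable (X i) μ) (h_indep : iIndepFun X μ)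
    (hmean : ∀ i, μ[X i] = 0) (hbdd : ∀ i, ∀ᵐ ω ∂μ, |X i ω| ≤ 1) (w : ι → ℝ) {ε : ℝ}
    (hε : 0 ≤ ε) :
    μ.real {ω | ε ≤ |∑ i, w i * X i ω|} ≤ 2 * exp (-ε ^ 2 / (2 * ∑ i, w i ^ 2)) := by
  have h_subG : ∀ i, HasSubgaussianMGF (X i) 1 μ := fun i => by
    convert hasSubgaussianMGF_of_mem_Icc_of_integral_eq_zero (hXm i)
      (by filter_upwards [hbdd i] with ω hω using abs_le.mp hω) (hmean i)
    norm_num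
  convert measure_abs_sum_ge_le_of_iIndepFun
    (h_indep.comp (fun i x => w i * x) fun i => measurable_const_mul (w i))
    (s := Finset.univ) (fun i _ => (h_subG i).const_mul (w i)) hε using 4
  · rfl
  · rw [NNReal.coe_sum]
    exact congrArg _ (Finset.sum_congr rfl fun i _ => (mul_one (w i ^ 2)).symm)

end Hoeffding

lemma inner_toEuclideanLin_eq_sum {m n : Type*} [Fintype m] [Fintype n] [DecidableEq n]
    (M : Matrix m n ℝ) (u : EuclideanSpace ℝ m) (v : EuclideanSpace ℝ n) :
    ⟪u, M.toEuclideanLin v⟫ = ∑ r : m × n, u r.1 * v r.2 * M r.1 r.2 := by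
  simp only [PiLp.inner_apply, RCLike.inner_apply, conj_trivial, Matrix.toLpLin_apply,
    Matrix.mulVec, dotProduct, Fintype.sum_prod_type, Finset.sum_mul]
  refine Finset.sum_congr rfl fun i _ => Finset.sum_congr rfl fun j _ => ?_
  ring

lemma specNorm_le_frobNorm {p q : ℕ} (M : Matrix (Fin p) (Fin q) ℝ) :
    specNorm M ≤ frobNorm M := by
  refine ContinuousLinearMap.opNorm_le_bound _ (Real.sqrt_nonneg _) fun v => ?_
  refine (sq_le_sq₀ (norm_nonneg _) (mul_nonneg (Real.sqrt_nonneg _) (norm_nonneg _))).mp ?_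
  rw [mul_pow, sq_sqrt (by positivity), EuclideanSpace.real_norm_sq_eq,
    EuclideanSpace.real_norm_sq_eq, Finset.sum_mul]
  refine Finset.sum_le_sum fun i _ => ?_
  simpa [Matrix.toLpLin_apply, Matrix.mulVec, dotProduct] using
    Finset.sum_mul_sq_le_sq_mul_sq Finset.univ (M i) v

lemma frobNorm_le_sqrt_of_abs_le_one {p q : ℕ} {M : Matrix (Fin p) (Fin q) ℝ}
    (hM : ∀ i j, |M i j| ≤ 1) : frobNorm M ≤ √(p * q) := by
  refine Real.sqrt_le_sqrt ?_
  calc ∑ i, ∑ j, M i j ^ 2 ≤ ∑ _i : Fin p, ∑ _j : Fin q, (1 : ℝ) := by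
        gcongr with i _ j _
        exact (sq_le_one_iff_abs_le_one _).mpr (hM i j)
    _ = p * q := by simp

lemma lt_nine_mul_log {x : ℝ} (h2 : 2 ≤ x) (h20 : x ≤ 20) : x < 9 * log x := by
  have hconc : ConcaveOn ℝ (Set.Ioi 0) fun x => 9 * log x - x :=
    (strictConcaveOn_log_Ioi.concaveOn.smul (by norm_num : (0 : ℝ) ≤ 9)).sub
      (convexOn_id (convex_Ioi 0))
  have hmin := hconc.min_le_of_mem_Icc (by norm_num : (2 : ℝ) ∈ Set.Ioi 0)
    (by norm_num : (20 : ℝ) ∈ Set.Ioi 0) ⟨h2, h20⟩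
  have hlog20 : 4 * log 2 ≤ log 20 := by
    calc 4 * log 2 = log (2 ^ 4) := by rw [log_pow]; norm_num
      _ ≤ log 20 := log_le_log (by norm_num) (by norm_num)
  have hlog2 := log_two_gt_d9
  have hpos := (lt_min_iff.mpr ⟨by linarith, by linarith⟩ :
    0 < min (9 * log 2 - 2) (9 * log 20 - 20)).trans_le hmin
  linarith

lemma specNorm_lt_three_mul_sqrt_mul_log {p q n : ℕ} {M : Matrix (Fin p) (Fin q) ℝ}
    (hM : ∀ i j, |M i j| ≤ 1) (hp : p ≤ n) (hq : q ≤ n) (hn : 2 ≤ n) (hn₂₀ : n ≤ 20) :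
    specNorm M < 3 * √(n * log n) := by
  have hn' : (2 : ℝ) ≤ n := by exact_mod_cast hn
  have hlog := lt_nine_mul_log hn' (by exact_mod_cast hn₂₀)
  calc specNorm M ≤ frobNorm M := specNorm_le_frobNorm M
    _ ≤ √(p * q) := frobNorm_le_sqrt_of_abs_le_one hM
    _ ≤ √(n * n) := by gcongr
    _ = n := sqrt_mul_self (by positivity)
    _ < 3 * √(n * log n) := by
      refine lt_of_pow_lt_pow_left₀ 2 (by positivity) ?_
      rw [mul_pow, sq_sqrt (by positivity)]
      nlinarith

lemma exists_finset_sphere_isCover_card_le (d : ℕ) :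
    ∃ N : Finset (EuclideanSpace ℝ (Fin d)), (N : Set (EuclideanSpace ℝ (Fin d))) ⊆ sphere 0 1 ∧
      IsCover (1 / 16) (sphere 0 1) (N : Set (EuclideanSpace ℝ (Fin d))) ∧
      (N.card : ℝ) ≤ 33 ^ d := by
  obtain ⟨N, hN, hNcov, hNcard⟩ :=
    exists_finset_isCover_of_subset_closedBall (A := sphere (0 : EuclideanSpace ℝ (Fin d)) 1)
      sphere_subset_closedBall (ε := 1 / 16) (by norm_num)
  refine ⟨N, hN, hNcov, hNcard.trans_eq ?_⟩
  rw [finrank_euclideanSpace_fin]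
  norm_num

section RandomMatrix

variable {Ω : Type*} [MeasurableSpace Ω] {μ : Measure Ω} [IsProbabilityMeasure μ]

lemma measure_abs_inner_toEuclideanLin_ge_le {m n : Type*} [Fintype m] [Fintype n]
    [DecidableEq n] {W : Ω → Matrix m n ℝ} (hmeas : ∀ i j, Measurable fun ω => W ω i j)
    (hindep : iIndepFun (fun (r : m × n) ω => W ω r.1 r.2) μ)
    (hmean : ∀ i j, ∫ ω, W ω i j ∂μ = 0) (hbdd : ∀ i j, ∀ᵐ ω ∂μ, |W ω i j| ≤ 1)
    {u : EuclideanSpace ℝ m} {v : EuclideanSpace ℝ n} (hu : ‖u‖ = 1) (hv : ‖v‖ = 1)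
    {ε : ℝ} (hε : 0 ≤ ε) :
    μ.real {ω | ε ≤ |⟪u, (W ω).toEuclideanLin v⟫|} ≤ 2 * exp (-ε ^ 2 / 2) := by
  have hw : ∑ r : m × n, (u r.1 * v r.2) ^ 2 = 1 := by
    simp_rw [mul_pow, Fintype.sum_prod_type, ← Finset.mul_sum, ← Finset.sum_mul,
      ← EuclideanSpace.real_norm_sq_eq, hu, hv, one_pow, one_mul]
  simp_rw [inner_toEuclideanLin_eq_sum]
  convert measure_abs_sum_mul_ge_le_of_abs_le_one
    (fun r : m × n => (hmeas r.1 r.2).aemeasurable) hindep (fun r => hmean r.1 r.2)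
    (fun r => hbdd r.1 r.2) (fun r => u r.1 * v r.2) hε using 4
  rw [hw, mul_one]

lemma measure_specNorm_ge_le {p q : ℕ} {W : Ω → Matrix (Fin p) (Fin q) ℝ}
    (hmeas : ∀ i j, Measurable fun ω => W ω i j)
    (hindep : iIndepFun (fun (r : Fin p × Fin q) ω => W ω r.1 r.2) μ)
    (hmean : ∀ i j, ∫ ω, W ω i j ∂μ = 0) (hbdd : ∀ i j, ∀ᵐ ω ∂μ, |W ω i j| ≤ 1)
    {t : ℝ} (ht : 0 < t) :
    μ.real {ω | t ≤ specNorm (W ω)} ≤ 33 ^ (p + q) * (2 * exp (-(7 / 8 * t) ^ 2 / 2)) := by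
  obtain ⟨Np, hNp, hNpcov, hNpcard⟩ := exists_finset_sphere_isCover_card_le p
  obtain ⟨Nq, hNq, hNqcov, hNqcard⟩ := exists_finset_sphere_isCover_card_le q
  set s := 7 / 8 * t
  have hsub : {ω | t ≤ specNorm (W ω)} ⊆
      ⋃ z ∈ Np ×ˢ Nq, {ω | s ≤ |⟪z.1, (W ω).toEuclideanLin z.2⟫|} :=
    fun ω (hω : t ≤ specNorm (W ω)) => by
    obtain ⟨u, hu, v, hv, huv⟩ := exists_le_abs_inner_of_isCover_sphere _
      (hNp.trans sphere_subset_closedBall) hNpcov hNqcov (by positivity)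
      (by norm_num [s]; exact hω : s ≤ (1 - 2 * ((1 / 16 : ℝ≥0) : ℝ)) * specNorm (W ω))
    exact Set.mem_iUnion₂.mpr ⟨(u, v), Finset.mem_product.mpr ⟨hu, hv⟩, huv⟩
  calc μ.real {ω | t ≤ specNorm (W ω)}
      ≤ ∑ z ∈ Np ×ˢ Nq, μ.real {ω | s ≤ |⟪z.1, (W ω).toEuclideanLin z.2⟫|} :=
        (measureReal_mono hsub (measure_ne_top μ _)).trans (measureReal_biUnion_finset_le _ _)
    _ ≤ ∑ _z ∈ Np ×ˢ Nq, 2 * exp (-s ^ 2 / 2) := Finset.sum_le_sum fun z hz => by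
        rw [Finset.mem_product] at hz
        exact measure_abs_inner_toEuclideanLin_ge_le hmeas hindep hmean hbdd
          (mem_sphere_zero_iff_norm.mp (hNp hz.1)) (mem_sphere_zero_iff_norm.mp (hNq hz.2))
          (by positivity)
    _ = Np.card * Nq.card * (2 * exp (-s ^ 2 / 2)) := by
        rw [Finset.sum_const, Finset.card_product, nsmul_eq_mul]
        push_cast
        ring
    _ ≤ 33 ^ p * 33 ^ q * (2 * exp (-s ^ 2 / 2)) := by gcongr
    _ = 33 ^ (p + q) * (2 * exp (-s ^ 2 / 2)) := by rw [pow_add]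

end RandomMatrix

lemma thirtythree_pow_mul_exp_le {n : ℕ} (hn : 21 ≤ n) :
    (33 : ℝ) ^ (2 * n) * (2 * exp (-(7 / 8 * (3 * √(n * log n))) ^ 2 / 2)) ≤
      3 * (n : ℝ) ^ (-(7 : ℝ) / 2) := by
  have hn' : (21 : ℝ) ≤ n := by exact_mod_cast hn
  have hlog_n : 3 ≤ log n := by
    rw [le_log_iff_exp_le (by linarith)]
    calc exp 3 = exp 1 ^ 3 := by rw [← exp_nat_mul]; norm_num
      _ ≤ 2.7182818286 ^ 3 := by gcongr; exact exp_one_lt_d9.le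
      _ ≤ n := by linarith
  have hlog33 : log 33 < 7 / 2 := by
    have hlog_ratio : log (33 / 32) ≤ 33 / 32 - 1 := log_le_sub_one_of_pos (by norm_num)
    have h32 : log 33 = 5 * log 2 + log (33 / 32) := by
      rw [show (5 : ℝ) * log 2 = log (2 ^ 5) by rw [log_pow]; norm_num,
        ← log_mul (by norm_num) (by norm_num)]
      norm_num
    linarith [log_two_lt_d9]
  have hexp : -(7 / 8 * (3 * √(n * log n))) ^ 2 / 2 = -(441 / 128 * (n * log n)) := by
    rw [mul_pow, mul_pow, sq_sqrt (by positivity)]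
    ring
  have h33 : (33 : ℝ) ^ (2 * n) = exp (2 * n * log 33) := by
    rw [show (2 : ℝ) * n * log 33 = ((2 * n : ℕ) : ℝ) * log 33 by push_cast; ring,
      exp_nat_mul, exp_log (by norm_num)]
  rw [hexp, h33, rpow_def_of_pos (by linarith), mul_left_comm, ← exp_add]
  gcongr
  · norm_num
  · nlinarith [mul_le_mul_of_nonneg_left hlog_n (by linarith : (0 : ℝ) ≤ n - 21)]

theorem rectangular_bernstein_tail_general
    (Ωsp : Type) [MeasurableSpace Ωsp] (μ : Measure Ωsp) [IsProbabilityMeasure μ]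
    (n p q : ℕ) (hn : 2 ≤ n)
    (hp : p ≤ n) (hq : q ≤ n)
    (W : Ωsp → Matrix (Fin p) (Fin q) ℝ)
    (hmeas : ∀ i j, Measurable fun ω => W ω i j)
    (hindep : iIndepFun
      (fun (r : Fin p × Fin q) ω => W ω r.1 r.2) μ)
    (hmean : ∀ i j, ∫ ω, W ω i j ∂μ = 0)
    (hbdd : ∀ i j, ∀ᵐ ω ∂μ, |W ω i j| ≤ 1) :
    μ {ω | 3 * Real.sqrt ((n : ℝ) * Real.log n) ≤ specNorm (W ω)} ≤
      ENNReal.ofReal (3 * (n : ℝ) ^ (-(7 : ℝ) / 2)) := by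
  rcases le_or_gt n 20 with hsmall | hbig
  · have hnull : μ {ω | 3 * √(n * log n) ≤ specNorm (W ω)} = 0 := by
      refine measure_eq_zero_iff_ae_notMem.mpr ?_
      filter_upwards [ae_all_iff.mpr fun i => ae_all_iff.mpr (hbdd i)] with ω hω
      exact (specNorm_lt_three_mul_sqrt_mul_log hω hp hq hn hsmall).not_ge
    rw [hnull]
    exact zero_le
  · have hlog_pos : 0 < log n := log_pos (by exact_mod_cast (by omega : 1 < n))
    rw [← ofReal_measureReal]
    refine ENNReal.ofReal_le_ofReal ?_
    calc μ.real {ω | 3 * √(n * log n) ≤ specNorm (W ω)}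
        ≤ 33 ^ (p + q) * (2 * exp (-(7 / 8 * (3 * √(n * log n))) ^ 2 / 2)) :=
          measure_specNorm_ge_le hmeas hindep hmean hbdd (by positivity)
      _ ≤ 33 ^ (2 * n) * (2 * exp (-(7 / 8 * (3 * √(n * log n))) ^ 2 / 2)) := by
          gcongr
          · norm_num
          · omega
      _ ≤ 3 * (n : ℝ) ^ (-(7 : ℝ) / 2) := thirtythree_pow_mul_exp_le hbig

/-- Rectangular matrix Bernstein tail bound for a centered bounded random matrix. -/
theorem rectangular_bernstein_tail
    (Ωsp : Type) [MeasurableSpace Ωsp] (μ : Measure Ωsp) [IsProbabilityMeasure μ]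
    (n p q : ℕ) (hn : 2 ≤ n) (hlog : 4 * Real.log n ≤ n)
    (hp : p ≤ n) (hq : q ≤ n) (hpq : p + q ≤ 3 * n)
    (W : Ωsp → Matrix (Fin p) (Fin q) ℝ)
    (hmeas : ∀ i j, Measurable fun ω => W ω i j)
    (hindep : iIndepFun
      (fun (r : Fin p × Fin q) ω => W ω r.1 r.2) μ)
    (hmean : ∀ i j, ∫ ω, W ω i j ∂μ = 0)
    (hbdd : ∀ i j, ∀ᵐ ω ∂μ, |W ω i j| ≤ 1)
    (hvar : ∀ i j, ∫ ω, (W ω i j) ^ 2 ∂μ ≤ 1 / 4) :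
    μ {ω | 3 * Real.sqrt ((n : ℝ) * Real.log n) ≤ specNorm (W ω)} ≤
      ENNReal.ofReal (3 * (n : ℝ) ^ (-(7 : ℝ) / 2)) :=
  rectangular_bernstein_tail_general Ωsp μ n p q hn hp hq W hmeas hindep hmean hbdd
end
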